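/- Let p > p₀(5) and κ be as in the admissible range ((3-p)/(p-1) ≤ κ ≤ 2(p-1) if p<2; 1<κ≤2(p-1) if p≥2). Define for t,r ≥ 0: I₀(t,r) = ∫_0^t ⟨s⟩^{-(p-1)} ∫_{t-s-r}^{t-s+r} ⟨s+|ρ|⟩^{-p} ⟨s-|ρ|⟩^{-p(κ-1)} ⟨ρ⟩ dρ ds. Then there is a constant C such that I₀(t,r) ≤ C r ⟨t+r⟩^{-κ} whenever t ≥ 2r or r ≤ 1, and I₀(t,r) ≤ C ⟨t-r⟩^{-(κ-1)} whenever r ≤ t ≤ 2r and r ≥ 1. -/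

import Mathlib

/-!
Substituting `ξ = s + |ρ|` (the part of the `ρ`-integral with `ρ < 0` is dominated by the part
with `ρ ≥ 0`) and exchanging the order of integration bounds `I₀(t,r)` by
`2 ∫_{(t-r)₊}^{t+r} K(ξ) dξ` with `K(ξ) = ∫_0^ξ ⟨s⟩^{1-p} ⟨ξ⟩^{-p} ⟨ξ-2s⟩^{-p(κ-1)} ⟨ξ-s⟩ ds`.
The substitution `η = ξ - 2s` bounds `K(ξ)` by a multiple of `⟨ξ⟩^{1-p}` times the convolution
`∫_{-ξ}^{ξ} ⟨ξ-η⟩^{-(p-1)} ⟨η⟩^{-p(κ-1)} dη`, which splitting at `η = ξ/2` bounds by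
`⟨ξ⟩^{-(κ+1-p)}`; hence `K(ξ) ≲ ⟨ξ⟩^{-κ}`. If `t ≥ 2r` or `r ≤ 1`, then `⟨ξ⟩ ≳ ⟨t+r⟩` on the
interval `[(t-r)₊, t+r]` of length `≤ 2r`; otherwise the integral of `⟨ξ⟩^{-κ}` over it is bounded
by its tail from `t - r`, which is finite since `κ > 1`.
-/

open MeasureTheory

/-- The integral `I₀` from the nonlinear estimates. -/
noncomputable def I0 (p κ t r : ℝ) : ℝ :=
  ∫ s in (0:ℝ)..t, (1 + |s|) ^ (-(p - 1)) *
    ∫ ρ in (t - s - r)..(t - s + r),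
      (1 + |s + abs ρ|) ^ (-p) * (1 + |s - abs ρ|) ^ (-(p * (κ - 1))) * (1 + |ρ|)

open Set intervalIntegral Function

lemma rpow_neg_le_mul_rpow_neg {x y c a : ℝ} (hy : 0 < y) (hc : 0 < c) (hyx : y ≤ c * x)
    (ha : 0 ≤ a) : x ^ (-a) ≤ c ^ a * y ^ (-a) := by
  have hx : 0 < x := pos_of_mul_pos_right (hy.trans_le hyx) hc.le
  calc x ^ (-a) = c ^ a * (c * x) ^ (-a) := by
        rw [Real.mul_rpow hc.le hx.le, Real.rpow_neg hc.le, mul_inv_cancel_left₀ (by positivity)]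
    _ ≤ c ^ a * y ^ (-a) :=
        mul_le_mul_of_nonneg_left (Real.rpow_le_rpow_of_nonpos hy hyx (neg_nonpos.2 ha))
          (by positivity)

lemma Continuous.one_add_abs_rpow {X : Type*} [TopologicalSpace X] {f : X → ℝ}
    (hf : Continuous f) (e : ℝ) : Continuous fun x ↦ (1 + |f x|) ^ e :=
  (continuous_const.add hf.abs).rpow_const fun _ ↦ Or.inl (by dsimp; positivity)

lemma intervalIntegrable_one_add_rpow {e α β : ℝ} (hα : 0 ≤ α) (hβ : 0 ≤ β) :
    IntervalIntegrable (fun u ↦ (1 + u) ^ e) volume α β := by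
  refine ContinuousOn.intervalIntegrable
    ((continuousOn_const.add continuousOn_id).rpow_const fun u hu ↦ Or.inl ?_)
  rcases mem_uIcc.1 hu with h | h <;> exact (by linarith [h.1] : (0:ℝ) < 1 + u).ne'

lemma integral_one_add_rpow {e α β : ℝ} (hα : 0 ≤ α) (hβ : 0 ≤ β) (he : e ≠ -1) :
    ∫ u in α..β, (1 + u) ^ e = ((1 + β) ^ (e + 1) - (1 + α) ^ (e + 1)) / (e + 1) := by
  rw [integral_comp_add_left (fun x ↦ x ^ e), integral_rpow (Or.inr ⟨he, fun h ↦ ?_⟩)]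
  rcases mem_uIcc.1 h with h | h <;> linarith [h.1, h.2]

lemma integral_one_add_rpow_neg_le_of_one_lt {c α β : ℝ} (hc : 1 < c) (hα : 0 ≤ α)
    (hαβ : α ≤ β) : ∫ u in α..β, (1 + u) ^ (-c) ≤ (1 + α) ^ (1 - c) / (c - 1) := by
  rw [integral_one_add_rpow hα (hα.trans hαβ) (by linarith), show -c + 1 = -(c - 1) by ring,
    div_neg, ← neg_div, neg_sub, show -(c - 1) = 1 - c by ring]
  gcongr
  linarith [Real.rpow_nonneg (by linarith : (0:ℝ) ≤ 1 + β) (1 - c)]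

lemma integral_one_add_rpow_neg_le_of_pos {c μ ξ : ℝ} (hμ : 0 < μ) (hcμ : 1 - c ≤ μ)
    (hξ : 0 ≤ ξ) : ∫ u in (0:ℝ)..ξ, (1 + u) ^ (-c) ≤ (1 + ξ) ^ μ / μ := by
  calc ∫ u in (0:ℝ)..ξ, (1 + u) ^ (-c) ≤ ∫ u in (0:ℝ)..ξ, (1 + u) ^ (μ - 1) :=
        integral_mono_on hξ (intervalIntegrable_one_add_rpow le_rfl hξ)
          (intervalIntegrable_one_add_rpow le_rfl hξ) fun u hu ↦
          Real.rpow_le_rpow_of_exponent_le (by linarith [hu.1]) (by linarith)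
    _ ≤ (1 + ξ) ^ μ / μ := by
        rw [integral_one_add_rpow le_rfl hξ (by linarith), sub_add_cancel]
        gcongr
        norm_num

lemma exists_integral_one_add_rpow_neg_le {c μ : ℝ} (hμ : 0 ≤ μ) (hcμ : 1 - c ≤ μ)
    (h : 1 < c ∨ 0 < μ) :
    ∃ K > 0, ∀ ξ ≥ 0, ∫ u in (0:ℝ)..ξ, (1 + u) ^ (-c) ≤ K * (1 + ξ) ^ μ := by
  rcases h with hc | hμ
  · refine ⟨1 / (c - 1), by simpa using hc, fun ξ hξ ↦ ?_⟩
    calc ∫ u in (0:ℝ)..ξ, (1 + u) ^ (-c) ≤ (1 + 0) ^ (1 - c) / (c - 1) :=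
          integral_one_add_rpow_neg_le_of_one_lt hc le_rfl hξ
      _ = 1 / (c - 1) := by simp
      _ ≤ 1 / (c - 1) * (1 + ξ) ^ μ :=
          le_mul_of_one_le_right (one_div_pos.2 (sub_pos.2 hc)).le
            (Real.one_le_rpow (by linarith) hμ)
  · exact ⟨1 / μ, by positivity, fun ξ hξ ↦
      (integral_one_add_rpow_neg_le_of_pos hμ hcμ hξ).trans_eq (by ring)⟩

lemma integral_one_add_rpow_neg_le_sub_mul {κ α β : ℝ} (hκ : 0 ≤ κ) (hα : 0 ≤ α)
    (hαβ : α ≤ β) : ∫ u in α..β, (1 + u) ^ (-κ) ≤ (β - α) * (1 + α) ^ (-κ) := by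
  refine (le_abs_self _).trans ?_
  rw [← Real.norm_eq_abs, mul_comm, ← abs_of_nonneg (sub_nonneg.2 hαβ)]
  refine norm_integral_le_of_norm_le_const fun u hu ↦ ?_
  rw [uIoc_of_le hαβ] at hu
  rw [Real.norm_of_nonneg (Real.rpow_nonneg (by linarith [hu.1]) _)]
  exact Real.rpow_le_rpow_of_nonpos (by linarith) (by linarith [hu.1]) (by linarith)

lemma integral_comp_abs_le_two_mul {h : ℝ → ℝ} (hc : ContinuousOn h (Ici 0))
    (h0 : ∀ x, 0 ≤ x → 0 ≤ h x) {a b : ℝ} (hab : a ≤ b) (hab' : 0 ≤ a + b) :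
    ∫ x in a..b, h |x| ≤ 2 * ∫ x in (max a 0)..b, h x := by
  have hci : ∀ {α β : ℝ}, 0 ≤ α → 0 ≤ β → IntervalIntegrable h volume α β := fun hα hβ ↦
    (hc.mono fun _ hx ↦ mem_Ici.2 ((le_min hα hβ).trans hx.1)).intervalIntegrable
  have habs : ∀ {α β : ℝ}, 0 ≤ α → α ≤ β → ∫ x in α..β, h |x| = ∫ x in α..β, h x :=
    fun hα hαβ ↦ integral_congr fun x hx ↦ by
      rw [uIcc_of_le hαβ] at hx
      rw [abs_of_nonneg (hα.trans hx.1)]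
  rcases le_total 0 a with ha | ha
  · rw [max_eq_left ha, habs ha hab]
    have : 0 ≤ ∫ x in a..b, h x := integral_nonneg hab fun x hx ↦ h0 x (ha.trans hx.1)
    linarith
  · have hcabs : Continuous fun x ↦ h |x| :=
      hc.comp_continuous continuous_abs fun x ↦ abs_nonneg x
    have hneg : ∫ x in a..0, h |x| = ∫ x in (0:ℝ)..-a, h x := by
      rw [← neg_zero, ← integral_comp_neg, neg_zero]
      refine integral_congr fun x hx ↦ ?_
      rw [uIcc_of_le ha] at hx
      rw [abs_of_nonpos hx.2]
    have hmono : ∫ x in (0:ℝ)..-a, h x ≤ ∫ x in (0:ℝ)..b, h x :=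
      integral_mono_interval le_rfl (by linarith) (by linarith)
        ((ae_restrict_iff' measurableSet_Ioc).2 (ae_of_all _ fun x hx ↦ h0 x hx.1.le))
        (hci le_rfl (by linarith))
    rw [max_eq_right ha, ← integral_add_adjacent_intervals (hcabs.intervalIntegrable a 0)
      (hcabs.intervalIntegrable 0 b), hneg, habs le_rfl (by linarith)]
    linarith

lemma integral_one_add_abs_rpow_neg_le {c α β ξ : ℝ} (hα : -ξ ≤ α) (hαβ : α ≤ β)
    (hβ : β ≤ ξ) : ∫ u in α..β, (1 + |u|) ^ (-c) ≤ 2 * ∫ u in (0:ℝ)..ξ, (1 + u) ^ (-c) := by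
  have hξ : 0 ≤ ξ := by linarith
  calc ∫ u in α..β, (1 + |u|) ^ (-c) ≤ ∫ u in -ξ..ξ, (1 + |u|) ^ (-c) :=
        integral_mono_interval hα hαβ hβ (ae_of_all _ fun u ↦ by positivity)
          ((continuous_id.one_add_abs_rpow _).intervalIntegrable _ _)
    _ ≤ 2 * ∫ u in (max (-ξ) 0)..ξ, (1 + u) ^ (-c) :=
        integral_comp_abs_le_two_mul (h := fun u ↦ (1 + u) ^ (-c))
          ((continuousOn_const.add continuousOn_id).rpow_const fun u hu ↦
            Or.inl (by dsimp; linarith [mem_Ici.1 hu]))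
          (fun u hu ↦ Real.rpow_nonneg (by linarith) _) (by linarith) (by linarith)
    _ = 2 * ∫ u in (0:ℝ)..ξ, (1 + u) ^ (-c) := by rw [max_eq_right (by linarith)]

lemma integral_conv_le_of_le_half {a b α β ξ : ℝ} (ha : 0 ≤ a) (hα : -ξ ≤ α) (hαβ : α ≤ β)
    (hβ : β ≤ ξ / 2) :
    ∫ η in α..β, (1 + |ξ - η|) ^ (-a) * (1 + |η|) ^ (-b) ≤
      2 ^ a * (1 + ξ) ^ (-a) * (2 * ∫ u in (0:ℝ)..ξ, (1 + u) ^ (-b)) := by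
  have hξ : 0 ≤ ξ := by linarith
  calc ∫ η in α..β, (1 + |ξ - η|) ^ (-a) * (1 + |η|) ^ (-b)
      ≤ ∫ η in α..β, 2 ^ a * (1 + ξ) ^ (-a) * (1 + |η|) ^ (-b) := by
        refine integral_mono_on hαβ
          (((continuous_const.sub continuous_id).one_add_abs_rpow _).mul
            (continuous_id.one_add_abs_rpow _) |>.intervalIntegrable _ _)
          ((continuous_const.mul (continuous_id.one_add_abs_rpow _)).intervalIntegrable _ _)
          fun η hη ↦ mul_le_mul_of_nonneg_right ?_ (by positivity)
        refine rpow_neg_le_mul_rpow_neg (by positivity) two_pos ?_ ha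
        linarith [hη.2, le_abs_self (ξ - η)]
    _ ≤ 2 ^ a * (1 + ξ) ^ (-a) * (2 * ∫ u in (0:ℝ)..ξ, (1 + u) ^ (-b)) := by
        rw [intervalIntegral.integral_const_mul]
        exact mul_le_mul_of_nonneg_left
          (integral_one_add_abs_rpow_neg_le hα hαβ (by linarith)) (by positivity)

lemma integral_conv_le {a b ξ : ℝ} (ha : 0 ≤ a) (hb : 0 ≤ b) (hξ : 0 ≤ ξ) :
    ∫ η in -ξ..ξ, (1 + |ξ - η|) ^ (-a) * (1 + |η|) ^ (-b) ≤
      2 ^ a * (1 + ξ) ^ (-a) * (2 * ∫ u in (0:ℝ)..ξ, (1 + u) ^ (-b)) +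
        2 ^ b * (1 + ξ) ^ (-b) * (2 * ∫ u in (0:ℝ)..ξ, (1 + u) ^ (-a)) := by
  have hcont : Continuous fun η ↦ (1 + |ξ - η|) ^ (-a) * (1 + |η|) ^ (-b) :=
    ((continuous_const.sub continuous_id).one_add_abs_rpow _).mul
      (continuous_id.one_add_abs_rpow _)
  have hreflect : ∫ η in (ξ / 2)..ξ, (1 + |ξ - η|) ^ (-a) * (1 + |η|) ^ (-b) =
      ∫ η in (0:ℝ)..(ξ / 2), (1 + |ξ - η|) ^ (-b) * (1 + |η|) ^ (-a) := by
    have := integral_comp_sub_left (a := 0) (b := ξ / 2)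
      (fun η ↦ (1 + |ξ - η|) ^ (-a) * (1 + |η|) ^ (-b)) ξ
    rw [sub_zero, sub_half] at this
    rw [← this]
    exact integral_congr fun x _ ↦ by rw [sub_sub_cancel, mul_comm]
  rw [← integral_add_adjacent_intervals (hcont.intervalIntegrable _ (ξ / 2))
    (hcont.intervalIntegrable _ _), hreflect]
  exact add_le_add (integral_conv_le_of_le_half ha le_rfl (by linarith) le_rfl)
    (integral_conv_le_of_le_half hb (by linarith) (by linarith) le_rfl)

lemma integral_conv_le_rpow {a b lam A B ξ : ℝ} (ha : 0 ≤ a) (hb : 0 ≤ b) (hξ : 0 ≤ ξ)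
    (hA : ∫ u in (0:ℝ)..ξ, (1 + u) ^ (-a) ≤ A * (1 + ξ) ^ (b - lam))
    (hB : ∫ u in (0:ℝ)..ξ, (1 + u) ^ (-b) ≤ B * (1 + ξ) ^ (a - lam)) :
    ∫ η in -ξ..ξ, (1 + |ξ - η|) ^ (-a) * (1 + |η|) ^ (-b) ≤
      2 * (2 ^ a * B + 2 ^ b * A) * (1 + ξ) ^ (-lam) := by
  have hmerge : ∀ x, (1 + ξ) ^ (-x) * (1 + ξ) ^ (x - lam) = (1 + ξ) ^ (-lam) := fun x ↦ by
    rw [← Real.rpow_add (by linarith)]; ring_nf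
  calc _ ≤ 2 ^ a * (1 + ξ) ^ (-a) * (2 * (B * (1 + ξ) ^ (a - lam))) +
        2 ^ b * (1 + ξ) ^ (-b) * (2 * (A * (1 + ξ) ^ (b - lam))) := by
        refine (integral_conv_le ha hb hξ).trans (add_le_add ?_ ?_) <;> gcongr
    _ = 2 * (2 ^ a * B + 2 ^ b * A) * (1 + ξ) ^ (-lam) := by
        linear_combination (2 * 2 ^ a * B) * hmerge a + (2 * 2 ^ b * A) * hmerge b

lemma continuous_parametric_intervalIntegral_of_continuous_bounds {X : Type*}
    [TopologicalSpace X] {f : X → ℝ → ℝ} (hf : Continuous (uncurry f)) {u v : X → ℝ}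
    (hu : Continuous u) (hv : Continuous v) : Continuous fun x ↦ ∫ y in u x..v x, f x y := by
  have hsplit : ∀ x, ∫ y in u x..v x, f x y =
      (∫ y in (0:ℝ)..v x, f x y) - ∫ y in (0:ℝ)..u x, f x y := fun x ↦
    (integral_interval_sub_left ((hf.uncurry_left x).intervalIntegrable _ _)
      ((hf.uncurry_left x).intervalIntegrable _ _)).symm
  simp_rw [hsplit]
  exact (continuous_parametric_intervalIntegral_of_continuous hf hv).sub
    (continuous_parametric_intervalIntegral_of_continuous hf hu)

lemma integral_integral_max_le_integral_integral {f : ℝ → ℝ → ℝ} (hf : Continuous (uncurry f))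
    (hf0 : ∀ s ξ, 0 ≤ f s ξ) {a b c d : ℝ} (hab : a ≤ b) (hac : a ≤ c) (hbd : b ≤ d)
    (hcd : c ≤ d) :
    ∫ s in a..b, ∫ ξ in (max c s)..d, f s ξ ≤ ∫ ξ in c..d, ∫ s in a..ξ, f s ξ := by
  set F : ℝ → ℝ → ℝ := fun s ξ ↦ (Ioi s).indicator (f s) ξ
  have hF : uncurry F = {q : ℝ × ℝ | q.1 < q.2}.indicator (uncurry f) := by
    ext ⟨s, ξ⟩
    simp [F, indicator]
  have hFi : Integrable (uncurry F)
      ((volume.restrict (Ioc a b)).prod (volume.restrict (Ioc c d))) := by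
    rw [Measure.prod_restrict, ← Measure.volume_eq_prod, hF]
    exact ((hf.continuousOn.integrableOn_compact (isCompact_Icc.prod isCompact_Icc)).mono_set
      (prod_mono Ioc_subset_Icc_self Ioc_subset_Icc_self)).indicator
      (measurableSet_lt measurable_fst measurable_snd)
  have hswap : Continuous (uncurry fun ξ s ↦ f s ξ) := hf.comp continuous_swap
  calc ∫ s in a..b, ∫ ξ in (max c s)..d, f s ξ
        = ∫ s in Ioc a b, ∫ ξ in Ioc c d, F s ξ := by
        rw [integral_of_le hab]
        refine setIntegral_congr_fun measurableSet_Ioc fun s hs ↦ ?_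
        rw [integral_of_le (max_le hcd (hs.2.trans hbd)), setIntegral_indicator measurableSet_Ioi,
          Ioc_inter_Ioi]
    _ = ∫ ξ in Ioc c d, ∫ s in Ioc a b, F s ξ := integral_integral_swap hFi
    _ ≤ ∫ ξ in Ioc c d, ∫ s in a..ξ, f s ξ := by
        refine setIntegral_mono_on hFi.integral_prod_right
          (continuous_parametric_intervalIntegral_of_continuous hswap
            continuous_id).integrableOn_Ioc measurableSet_Ioc fun ξ hξ ↦ ?_
        have hind : (fun s ↦ F s ξ) = (Iio ξ).indicator fun s ↦ f s ξ := rfl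
        rw [hind, setIntegral_indicator measurableSet_Iio, integral_of_le (hac.trans hξ.1.le)]
        exact setIntegral_mono_set (hswap.uncurry_left ξ).integrableOn_Ioc
          (ae_of_all _ fun s ↦ hf0 s ξ)
          (show Ioc a b ∩ Iio ξ ⊆ Ioc a ξ from fun s hs ↦ ⟨hs.1.1, hs.2.le⟩).eventuallyLE
    _ = ∫ ξ in c..d, ∫ s in a..ξ, f s ξ := (integral_of_le hcd).symm

/-- The integrand of `I0` in the variables `s` and `ξ = s + |ρ|`. -/
noncomputable def I0Kernel (p κ s ξ : ℝ) : ℝ :=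
  (1 + |s|) ^ (-(p - 1)) *
    ((1 + |ξ|) ^ (-p) * (1 + |ξ - 2 * s|) ^ (-(p * (κ - 1))) * (1 + |ξ - s|))

lemma continuous_I0Kernel (p κ : ℝ) : Continuous (uncurry (I0Kernel p κ)) := by
  unfold I0Kernel
  exact (continuous_fst.one_add_abs_rpow _).mul (((continuous_snd.one_add_abs_rpow _).mul
    ((continuous_snd.sub (continuous_const.mul continuous_fst)).one_add_abs_rpow _)).mul
    (continuous_const.add (continuous_snd.sub continuous_fst).abs))

lemma I0Kernel_nonneg (p κ s ξ : ℝ) : 0 ≤ I0Kernel p κ s ξ := by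
  unfold I0Kernel
  positivity

lemma I0_eq_integral_integral_I0Kernel (p κ t r : ℝ) :
    I0 p κ t r =
      ∫ s in (0:ℝ)..t, ∫ ρ in (t - s - r)..(t - s + r), I0Kernel p κ s (s + |ρ|) := by
  unfold I0 I0Kernel
  refine integral_congr fun s _ ↦ ?_
  rw [← intervalIntegral.integral_const_mul]
  refine integral_congr fun ρ _ ↦ ?_
  rw [show s + |ρ| - 2 * s = -(s - |ρ|) by ring, abs_neg, add_sub_cancel_left, abs_abs]

lemma integral_I0Kernel_comp_abs_le {p κ t r s : ℝ} (hs : 0 ≤ s) (hst : s ≤ t) (hr : 0 ≤ r) :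
    ∫ ρ in (t - s - r)..(t - s + r), I0Kernel p κ s (s + |ρ|) ≤
      2 * ∫ ξ in (max (max (t - r) 0) s)..(t + r), I0Kernel p κ s ξ := by
  have hcont : Continuous fun x ↦ I0Kernel p κ s (s + x) :=
    (continuous_I0Kernel p κ).comp (continuous_const.prodMk (continuous_const.add continuous_id))
  have hlow : s + max (t - s - r) 0 = max (max (t - r) 0) s := by
    rw [max_assoc, max_eq_right hs, ← max_add_add_left]
    congr 1 <;> ring
  calc ∫ ρ in (t - s - r)..(t - s + r), I0Kernel p κ s (s + |ρ|)
      ≤ 2 * ∫ x in (max (t - s - r) 0)..(t - s + r), I0Kernel p κ s (s + x) :=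
        integral_comp_abs_le_two_mul hcont.continuousOn (fun x _ ↦ I0Kernel_nonneg _ _ _ _)
          (by linarith) (by linarith)
    _ = 2 * ∫ ξ in (max (max (t - r) 0) s)..(t + r), I0Kernel p κ s ξ := by
        rw [integral_comp_add_left (fun ξ ↦ I0Kernel p κ s ξ), hlow,
          show s + (t - s + r) = t + r by ring]

lemma I0_le_integral_integral_I0Kernel {p κ t r : ℝ} (ht : 0 ≤ t) (hr : 0 ≤ r) :
    I0 p κ t r ≤ 2 * ∫ ξ in (max (t - r) 0)..(t + r), ∫ s in (0:ℝ)..ξ, I0Kernel p κ s ξ := by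
  have hK := continuous_I0Kernel p κ
  have hleft : Continuous fun s ↦ ∫ ρ in (t - s - r)..(t - s + r), I0Kernel p κ s (s + |ρ|) :=
    continuous_parametric_intervalIntegral_of_continuous_bounds
      (f := fun s ρ ↦ I0Kernel p κ s (s + |ρ|))
      (hK.comp (continuous_fst.prodMk (continuous_fst.add continuous_snd.abs)))
      (by fun_prop) (by fun_prop)
  have hright : Continuous fun s ↦ ∫ ξ in (max (max (t - r) 0) s)..(t + r), I0Kernel p κ s ξ :=
    continuous_parametric_intervalIntegral_of_continuous_bounds hK (by fun_prop) (by fun_prop)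
  rw [I0_eq_integral_integral_I0Kernel]
  calc ∫ s in (0:ℝ)..t, ∫ ρ in (t - s - r)..(t - s + r), I0Kernel p κ s (s + |ρ|)
      ≤ ∫ s in (0:ℝ)..t, 2 * ∫ ξ in (max (max (t - r) 0) s)..(t + r), I0Kernel p κ s ξ :=
        integral_mono_on ht (hleft.intervalIntegrable _ _)
          ((continuous_const.mul hright).intervalIntegrable _ _)
          fun s hs ↦ integral_I0Kernel_comp_abs_le hs.1 hs.2 hr
    _ ≤ 2 * ∫ ξ in (max (t - r) 0)..(t + r), ∫ s in (0:ℝ)..ξ, I0Kernel p κ s ξ := by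
        rw [intervalIntegral.integral_const_mul]
        gcongr
        exact integral_integral_max_le_integral_integral hK (I0Kernel_nonneg p κ) ht
          (le_max_right _ _) (by linarith) (max_le (by linarith) (by linarith))

lemma integral_I0Kernel_le {p κ ξ : ℝ} (hp : 1 ≤ p) (hξ : 0 ≤ ξ) :
    ∫ s in (0:ℝ)..ξ, I0Kernel p κ s ξ ≤ 2 ^ (p - 1) * (1 + ξ) ^ (-p) * (1 + ξ) *
      (2⁻¹ * ∫ η in -ξ..ξ, (1 + |ξ - η|) ^ (-(p - 1)) * (1 + |η|) ^ (-(p * (κ - 1)))) := by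
  set F : ℝ → ℝ := fun η ↦ (1 + |ξ - η|) ^ (-(p - 1)) * (1 + |η|) ^ (-(p * (κ - 1)))
  have hF : Continuous F := ((continuous_const.sub continuous_id).one_add_abs_rpow _).mul
    (continuous_id.one_add_abs_rpow _)
  calc ∫ s in (0:ℝ)..ξ, I0Kernel p κ s ξ
      ≤ ∫ s in (0:ℝ)..ξ, 2 ^ (p - 1) * (1 + ξ) ^ (-p) * (1 + ξ) * F (ξ - 2 * s) := by
        refine integral_mono_on hξ
          (((continuous_I0Kernel p κ).comp
            (continuous_id.prodMk continuous_const)).intervalIntegrable _ _)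
          ((continuous_const.mul (hF.comp (continuous_const.sub
            (continuous_const.mul continuous_id)))).intervalIntegrable _ _) fun s hs ↦ ?_
        have hs2 : (1 + |s|) ^ (-(p - 1)) ≤ 2 ^ (p - 1) * (1 + |2 * s|) ^ (-(p - 1)) :=
          rpow_neg_le_mul_rpow_neg (by positivity) two_pos
            (by rw [abs_mul, abs_two]; linarith [abs_nonneg s]) (by linarith)
        have hξs : 1 + |ξ - s| ≤ 1 + ξ := by
          rw [abs_of_nonneg (by linarith [hs.2])]; linarith [hs.1]
        calc I0Kernel p κ s ξ
            ≤ 2 ^ (p - 1) * (1 + |2 * s|) ^ (-(p - 1)) *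
                ((1 + ξ) ^ (-p) * (1 + |ξ - 2 * s|) ^ (-(p * (κ - 1))) * (1 + ξ)) := by
              unfold I0Kernel
              rw [abs_of_nonneg hξ]
              exact mul_le_mul hs2 (mul_le_mul_of_nonneg_left hξs (by positivity))
                (by positivity) (by positivity)
          _ = 2 ^ (p - 1) * (1 + ξ) ^ (-p) * (1 + ξ) * F (ξ - 2 * s) := by
              simp only [F, sub_sub_cancel]; ring
    _ = 2 ^ (p - 1) * (1 + ξ) ^ (-p) * (1 + ξ) * (2⁻¹ * ∫ η in -ξ..ξ, F η) := by
        rw [intervalIntegral.integral_const_mul, integral_comp_sub_mul F two_ne_zero,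
          smul_eq_mul, mul_zero, sub_zero, show ξ - 2 * ξ = -ξ by ring]

lemma exists_integral_I0Kernel_le {p κ : ℝ} (hp1 : 1 < p) (hp : 1 + 3 * p < 2 * p ^ 2)
    (hκ : 1 < κ) (hκp : κ ≤ 2 * (p - 1)) (hκp' : 3 - p ≤ κ * (p - 1)) :
    ∃ D > 0, ∀ ξ ≥ 0, ∫ s in (0:ℝ)..ξ, I0Kernel p κ s ξ ≤ D * (1 + ξ) ^ (-κ) := by
  obtain ⟨A, hA0, hA⟩ := exists_integral_one_add_rpow_neg_le (c := p - 1)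
    (μ := p * (κ - 1) - (κ + 1 - p)) (by nlinarith) (by nlinarith) (Or.inr (by nlinarith))
  -- `p > p₀(5)`, i.e. `2p² - 3p - 1 > 0`, is needed only at the endpoint `κ = 2(p - 1)`, where
  -- it makes `p(κ - 1) > 1`.
  obtain ⟨B, hB0, hB⟩ := exists_integral_one_add_rpow_neg_le (c := p * (κ - 1))
    (μ := p - 1 - (κ + 1 - p)) (by linarith) (by nlinarith) (by
      rcases hκp.lt_or_eq with h | h
      · exact Or.inr (by linarith)
      · exact Or.inl (by rw [h]; nlinarith))
  refine ⟨2 ^ (p - 1) * 2⁻¹ * (2 * (2 ^ (p - 1) * B + 2 ^ (p * (κ - 1)) * A)), by positivity,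
    fun ξ hξ ↦ ?_⟩
  have hexp : (1 + ξ) ^ (-p) * (1 + ξ) * (1 + ξ) ^ (-(κ + 1 - p)) = (1 + ξ) ^ (-κ) := by
    rw [← Real.rpow_add_one (by positivity), ← Real.rpow_add (by positivity)]
    ring_nf
  calc ∫ s in (0:ℝ)..ξ, I0Kernel p κ s ξ
      ≤ 2 ^ (p - 1) * (1 + ξ) ^ (-p) * (1 + ξ) *
        (2⁻¹ * ∫ η in -ξ..ξ, (1 + |ξ - η|) ^ (-(p - 1)) * (1 + |η|) ^ (-(p * (κ - 1)))) :=
        integral_I0Kernel_le hp1.le hξ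
    _ ≤ 2 ^ (p - 1) * (1 + ξ) ^ (-p) * (1 + ξ) * (2⁻¹ *
        (2 * (2 ^ (p - 1) * B + 2 ^ (p * (κ - 1)) * A) * (1 + ξ) ^ (-(κ + 1 - p)))) := by
        gcongr
        exact integral_conv_le_rpow (by linarith) (by nlinarith) hξ (hA ξ hξ) (hB ξ hξ)
    _ = 2 ^ (p - 1) * 2⁻¹ * (2 * (2 ^ (p - 1) * B + 2 ^ (p * (κ - 1)) * A)) *
        (1 + ξ) ^ (-κ) := by
        rw [← hexp]; ring

lemma exists_I0_le_mul_integral {p κ : ℝ} (hp1 : 1 < p) (hp : 1 + 3 * p < 2 * p ^ 2)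
    (hκ : 1 < κ) (hκp : κ ≤ 2 * (p - 1)) (hκp' : 3 - p ≤ κ * (p - 1)) :
    ∃ C > 0, ∀ t ≥ 0, ∀ r ≥ 0,
      I0 p κ t r ≤ C * ∫ ξ in (max (t - r) 0)..(t + r), (1 + ξ) ^ (-κ) := by
  obtain ⟨D, hD0, hD⟩ := exists_integral_I0Kernel_le hp1 hp hκ hκp hκp'
  refine ⟨2 * D, by positivity, fun t ht r hr ↦ ?_⟩
  have hm : max (t - r) 0 ≤ t + r := max_le (by linarith) (by linarith)
  calc I0 p κ t r
      ≤ 2 * ∫ ξ in (max (t - r) 0)..(t + r), ∫ s in (0:ℝ)..ξ, I0Kernel p κ s ξ :=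
        I0_le_integral_integral_I0Kernel ht hr
    _ ≤ 2 * ∫ ξ in (max (t - r) 0)..(t + r), D * (1 + ξ) ^ (-κ) := by
        gcongr
        have hswap : Continuous (uncurry fun ξ s ↦ I0Kernel p κ s ξ) :=
          (continuous_I0Kernel p κ).comp continuous_swap
        exact integral_mono_on hm ((continuous_parametric_intervalIntegral_of_continuous
            hswap continuous_id).intervalIntegrable _ _)
          ((intervalIntegrable_one_add_rpow (le_max_right _ _) (by linarith)).const_mul D)
          fun ξ hξ ↦ hD ξ ((le_max_right _ _).trans hξ.1)
    _ = 2 * D * ∫ ξ in (max (t - r) 0)..(t + r), (1 + ξ) ^ (-κ) := by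
        rw [intervalIntegral.integral_const_mul, mul_assoc]

lemma integral_one_add_rpow_neg_le_of_two_mul_le_or_le_one {κ t r : ℝ} (hκ : 0 ≤ κ)
    (ht : 0 ≤ t) (hr : 0 ≤ r) (h : 2 * r ≤ t ∨ r ≤ 1) :
    ∫ ξ in (max (t - r) 0)..(t + r), (1 + ξ) ^ (-κ) ≤ 2 * 4 ^ κ * r * (1 + (t + r)) ^ (-κ) := by
  have hm := le_max_left (t - r) 0
  have hm0 := le_max_right (t - r) 0
  have hfour : 1 + (t + r) ≤ 4 * (1 + max (t - r) 0) := by rcases h with h | h <;> linarith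
  calc ∫ ξ in (max (t - r) 0)..(t + r), (1 + ξ) ^ (-κ)
      ≤ (t + r - max (t - r) 0) * (1 + max (t - r) 0) ^ (-κ) :=
        integral_one_add_rpow_neg_le_sub_mul hκ hm0 (max_le (by linarith) (by linarith))
    _ ≤ (2 * r) * (4 ^ κ * (1 + (t + r)) ^ (-κ)) :=
        mul_le_mul (by linarith) (rpow_neg_le_mul_rpow_neg (by positivity) (by norm_num) hfour hκ)
          (by positivity) (by positivity)
    _ = 2 * 4 ^ κ * r * (1 + (t + r)) ^ (-κ) := by ring

/-- Estimates for `I₀`: `I₀(t,r) ≲ r⟨t+r⟩^{-κ}` if `t ≥ 2r` or `r ≤ 1`, and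
`I₀(t,r) ≲ ⟨t-r⟩^{-(κ-1)}` if `r ≤ t ≤ 2r` and `r ≥ 1`. -/
theorem stmt13 (p κ : ℝ) (hp : (3 + Real.sqrt 17) / 4 < p)
    (hκ1 : p < 2 → (3 - p) / (p - 1) ≤ κ ∧ κ ≤ 2 * (p - 1))
    (hκ2 : 2 ≤ p → 1 < κ ∧ κ ≤ 2 * (p - 1)) :
    ∃ C > (0:ℝ), ∀ t ≥ (0:ℝ), ∀ r ≥ (0:ℝ),
      ((2 * r ≤ t ∨ r ≤ 1) → I0 p κ t r ≤ C * r * (1 + |t + r|) ^ (-κ))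
      ∧ (r ≤ t → t ≤ 2 * r → 1 ≤ r → I0 p κ t r ≤ C * (1 + |t - r|) ^ (-(κ - 1))) := by
  have h17 : 4 < √17 := by rw [Real.lt_sqrt] <;> norm_num
  have hp1 : 1 < p := by linarith
  have hp2 : 1 + 3 * p < 2 * p ^ 2 := by nlinarith [Real.sq_sqrt (show (0:ℝ) ≤ 17 by norm_num)]
  obtain ⟨hκ, hκp, hκp'⟩ : 1 < κ ∧ κ ≤ 2 * (p - 1) ∧ 3 - p ≤ κ * (p - 1) := by
    rcases lt_or_ge p 2 with h | h
    · obtain ⟨h1, h2⟩ := hκ1 h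
      rw [div_le_iff₀ (by linarith)] at h1
      exact ⟨by nlinarith, h2, h1⟩
    · obtain ⟨h1, h2⟩ := hκ2 h
      exact ⟨h1, h2, by nlinarith⟩
  obtain ⟨C, hC0, hC⟩ := exists_I0_le_mul_integral hp1 hp2 hκ hκp hκp'
  have hκ' : 0 < 1 / (κ - 1) := one_div_pos.2 (sub_pos.2 hκ)
  refine ⟨C * (2 * 4 ^ κ + 1 / (κ - 1)), by positivity,
    fun t ht r hr ↦ ⟨fun h ↦ ?_, fun hrt _ _ ↦ ?_⟩⟩
  · rw [abs_of_nonneg (by linarith)]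
    calc I0 p κ t r ≤ C * (2 * 4 ^ κ * r * (1 + (t + r)) ^ (-κ)) := by
          grw [hC t ht r hr, integral_one_add_rpow_neg_le_of_two_mul_le_or_le_one
            (by linarith) ht hr h]
      _ = C * (2 * 4 ^ κ) * r * (1 + (t + r)) ^ (-κ) := by ring
      _ ≤ C * (2 * 4 ^ κ + 1 / (κ - 1)) * r * (1 + (t + r)) ^ (-κ) := by
          gcongr
          linarith
  · rw [abs_of_nonneg (by linarith), neg_sub]
    calc I0 p κ t r ≤ C * ((1 + (t - r)) ^ (1 - κ) / (κ - 1)) := by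
          grw [hC t ht r hr, max_eq_left (by linarith),
            integral_one_add_rpow_neg_le_of_one_lt hκ (by linarith) (by linarith)]
      _ = C * (1 / (κ - 1)) * (1 + (t - r)) ^ (1 - κ) := by ring
      _ ≤ C * (2 * 4 ^ κ + 1 / (κ - 1)) * (1 + (t - r)) ^ (1 - κ) := by
          gcongr
          linarith [show (0:ℝ) < 2 * 4 ^ κ by positivity]
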